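/- arXiv:1906.11173 — 3 statements merged into one kernel-verified Lean document; each statement's English description precedes it below -/
import Mathlib

section
/- Let θ be a real d×c matrix and let Y = (P,Q) ∈ ℤ^d × ℤ^c. If X = M_θ·Y is a minimal vector of the lattice Λ_θ = M_θ·ℤ^{d+c} with positive height |X|_- > 0, then (P,Q) is a best approximation vector of θ, i.e. Q is a best simultaneous Diophantine approximation denominator of θ and ‖θQ − P‖_{ℝ^d} = dist(θQ, ℤ^d). -/
open MeasureTheory Filter Topology

noncomputable section

/-- The point of `ℝ^k` (with the Euclidean norm) associated with an integer vector. -/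
def intVec {k : ℕ} (Q : Fin k → ℤ) : EuclideanSpace ℝ (Fin k) := WithLp.toLp 2 (fun i => (Q i : ℝ))

/-- Euclidean distance from a point of `ℝ^k` to the integer lattice `ℤ^k`. -/
def distZ {k : ℕ} (x : EuclideanSpace ℝ (Fin k)) : ℝ :=
  Metric.infDist x (Set.range (intVec (k := k)))

/-- The product `θ·Q ∈ ℝ^d` of a `d×c` real matrix with an integer vector `Q ∈ ℤ^c`. -/
def matVec {d c : ℕ} (θ : Fin d → Fin c → ℝ) (Q : Fin c → ℤ) : EuclideanSpace ℝ (Fin d) :=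
  WithLp.toLp 2 (fun i => ∑ j, θ i j * (Q j : ℝ))

/-- `Q ∈ ℤ^c` is a best simultaneous Diophantine approximation denominator of `θ`. -/
def IsBestDenom {d c : ℕ} (θ : Fin d → Fin c → ℝ) (Q : Fin c → ℤ) : Prop :=
  Q ≠ 0 ∧ ∀ U : Fin c → ℤ, U ≠ 0 →
    (‖intVec U‖ < ‖intVec Q‖ → distZ (matVec θ Q) < distZ (matVec θ U)) ∧
    (‖intVec U‖ ≤ ‖intVec Q‖ → distZ (matVec θ Q) ≤ distZ (matVec θ U))

/-- `Q : ℕ → ℤ^c` enumerates the best approximation denominators of `θ`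
in ascending order of norm. -/
def IsBestSeq {d c : ℕ} (θ : Fin d → Fin c → ℝ) (Q : ℕ → Fin c → ℤ) : Prop :=
  (∀ n, IsBestDenom θ (Q n)) ∧
  StrictMono (fun n => ‖intVec (Q n)‖) ∧
  ∀ U, IsBestDenom θ U → ∃ n, ‖intVec U‖ = ‖intVec (Q n)‖

/-- The image `M_θ·(P,Q) = (P − θQ, Q)` in `ℝ^d × ℝ^c` (the latter carrying the max norm). -/
def Mmap {d c : ℕ} (θ : Fin d → Fin c → ℝ) (Y : (Fin d → ℤ) × (Fin c → ℤ)) :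
    EuclideanSpace ℝ (Fin d) × EuclideanSpace ℝ (Fin c) :=
  (intVec Y.1 - matVec θ Y.2, intVec Y.2)

/-- The lattice `Λ_θ = M_θ·ℤ^{d+c}` as a subset of `ℝ^d × ℝ^c`. -/
def LatTheta {d c : ℕ} (θ : Fin d → Fin c → ℝ) :
    Set (EuclideanSpace ℝ (Fin d) × EuclideanSpace ℝ (Fin c)) :=
  Set.range (Mmap θ)

/-- `X` is a minimal vector of `Λ`: `X ∈ Λ`, `X ≠ 0`, and any nonzero `Y ∈ Λ` lying in the
cylinder `C(X)` (i.e. `|Y|_+ ≤ |X|_+` and `|Y|_- ≤ |X|_-`) defines the same cylinder. -/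
def IsMinimalIn {d c : ℕ}
    (Λ : Set (EuclideanSpace ℝ (Fin d) × EuclideanSpace ℝ (Fin c)))
    (X : EuclideanSpace ℝ (Fin d) × EuclideanSpace ℝ (Fin c)) : Prop :=
  X ∈ Λ ∧ X ≠ 0 ∧ ∀ Y ∈ Λ, Y ≠ 0 → ‖Y.1‖ ≤ ‖X.1‖ → ‖Y.2‖ ≤ ‖X.2‖ →
    ‖Y.1‖ = ‖X.1‖ ∧ ‖Y.2‖ = ‖X.2‖


def nvec {k : ℕ} (x : EuclideanSpace ℝ (Fin k)) : Fin k → ℤ := fun i => round (x i)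

lemma nvec_le {k : ℕ} (x : EuclideanSpace ℝ (Fin k)) (R : Fin k → ℤ) :
    ‖x - intVec (nvec x)‖ ≤ ‖x - intVec R‖ := by
  rw [EuclideanSpace.norm_eq, EuclideanSpace.norm_eq]
  apply Real.sqrt_le_sqrt
  apply Finset.sum_le_sum
  intro i _
  have h : |x i - (round (x i) : ℝ)| ≤ |x i - (R i : ℝ)| := round_le (x i) (R i)
  have : ‖x i - (round (x i) : ℝ)‖ ≤ ‖x i - (R i : ℝ)‖ := by simpa [Real.norm_eq_abs] using h
  simpa [intVec, nvec] using pow_le_pow_left₀ (norm_nonneg _) this 2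

lemma distZ_eq {k : ℕ} (x : EuclideanSpace ℝ (Fin k)) :
    distZ x = ‖x - intVec (nvec x)‖ := by
  apply le_antisymm
  · have := Metric.infDist_le_dist_of_mem (x := x) (Set.mem_range_self (f := intVec) (nvec x))
    simpa [distZ, dist_eq_norm] using this
  · by_contra hcon
    push_neg at hcon
    obtain ⟨y, ⟨R, rfl⟩, hy⟩ := (Metric.infDist_lt_iff ⟨_, Set.mem_range_self (f := intVec) (nvec x)⟩).mp hcon
    rw [dist_eq_norm] at hy
    exact absurd hy (not_lt.mpr (nvec_le x R))

lemma intVec_ne_zero {k : ℕ} {U : Fin k → ℤ} (h : U ≠ 0) : intVec U ≠ 0 := by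
  intro h0
  apply h
  funext i
  have h1 : (U i : ℝ) = 0 := by
    have : intVec U i = (0 : EuclideanSpace ℝ (Fin k)) i := by rw [h0]
    simpa [intVec] using this
  exact_mod_cast h1

/-- **Minimal vectors with positive height give best approximation vectors.**
If `X = M_θ·(P,Q)` is a minimal vector of `Λ_θ` with `|X|_- = ‖Q‖ > 0`, then `Q` is a best
simultaneous Diophantine approximation denominator of `θ` and `‖θQ − P‖ = dist(θQ, ℤ^d)`. -/
theorem minimal_vector_is_best_approx (d c : ℕ) (hd : 0 < d) (hc : 0 < c)
    (θ : Fin d → Fin c → ℝ) (P : Fin d → ℤ) (Q : Fin c → ℤ)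
    (hmin : IsMinimalIn (LatTheta θ) (Mmap θ (P, Q)))
    (hpos : 0 < ‖intVec Q‖) :
    IsBestDenom θ Q ∧ ‖matVec θ Q - intVec P‖ = distZ (matVec θ Q) := by
  obtain ⟨hmem, hne, hkey⟩ := hmin
  have hQ0 : intVec Q ≠ 0 := by
    intro h; rw [h] at hpos; simp at hpos
  have hQne : Q ≠ 0 := by
    intro h; apply hQ0; ext i; simp [intVec, h]
  -- Step A: distZ (matVec θ Q) = ‖X.1‖
  have hX1 : (Mmap θ (P, Q)).1 = intVec P - matVec θ Q := rfl
  have hX2 : (Mmap θ (P, Q)).2 = intVec Q := rfl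
  set P' := nvec (matVec θ Q) with hP'
  have hYmem : Mmap θ (P', Q) ∈ LatTheta θ := ⟨(P', Q), rfl⟩
  have hYne : Mmap θ (P', Q) ≠ 0 := by
    intro h
    exact hQ0 (congrArg Prod.snd h)
  have hY1 : ‖(Mmap θ (P', Q)).1‖ = distZ (matVec θ Q) := by
    rw [distZ_eq]
    show ‖intVec P' - matVec θ Q‖ = _
    rw [norm_sub_rev]
  have hle1 : ‖(Mmap θ (P', Q)).1‖ ≤ ‖(Mmap θ (P, Q)).1‖ := by
    rw [hY1, hX1, norm_sub_rev, distZ_eq]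
    exact nvec_le _ P
  have hA := hkey (Mmap θ (P', Q)) hYmem hYne hle1 (le_of_eq rfl)
  have hdQ : distZ (matVec θ Q) = ‖(Mmap θ (P, Q)).1‖ := by
    rw [← hY1, hA.1]
  have goal2 : ‖matVec θ Q - intVec P‖ = distZ (matVec θ Q) := by
    rw [hdQ, hX1, norm_sub_rev]
  refine ⟨⟨hQne, ?_⟩, goal2⟩
  intro U hU
  have hU0 : intVec U ≠ 0 := intVec_ne_zero hU
  set P'' := nvec (matVec θ U) with hP''
  have hZmem : Mmap θ (P'', U) ∈ LatTheta θ := ⟨(P'', U), rfl⟩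
  have hZne : Mmap θ (P'', U) ≠ 0 := by
    intro h
    exact hU0 (congrArg Prod.snd h)
  have hZ1 : ‖(Mmap θ (P'', U)).1‖ = distZ (matVec θ U) := by
    rw [distZ_eq]
    show ‖intVec P'' - matVec θ U‖ = _
    rw [norm_sub_rev]
  have hZ2 : ‖(Mmap θ (P'', U)).2‖ = ‖intVec U‖ := rfl
  constructor
  · intro hlt
    by_cases hc1 : ‖(Mmap θ (P'', U)).1‖ ≤ ‖(Mmap θ (P, Q)).1‖
    · have h2 : ‖(Mmap θ (P'', U)).2‖ ≤ ‖(Mmap θ (P, Q)).2‖ := le_of_lt hlt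
      have := (hkey _ hZmem hZne hc1 h2).2
      rw [hZ2, hX2] at this
      exact absurd this (ne_of_lt hlt)
    · push_neg at hc1
      rw [hdQ, ← hZ1]
      exact hc1
  · intro hle
    by_cases hc1 : ‖(Mmap θ (P'', U)).1‖ ≤ ‖(Mmap θ (P, Q)).1‖
    · have := (hkey _ hZmem hZne hc1 hle).1
      rw [hdQ, ← hZ1, this]
    · push_neg at hc1
      rw [hdQ, ← hZ1]
      exact le_of_lt hc1
end
end

section
/- Let θ be a real d×c matrix and let Y = (P,Q) ∈ ℤ^d × ℤ^c be a best approximation vector of θ such that ‖P − θQ‖_{ℝ^d} < λ₁(ℤ^d), where λ₁(ℤ^d) is the length of a shortest nonzero vector of ℤ^d (so λ₁(ℤ^d) = 1 for the Euclidean norm). Then X = M_θ·Y is a minimal vector of the lattice Λ_θ = M_θ·ℤ^{d+c}. -/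
open MeasureTheory Filter Topology

noncomputable section

lemma intVec_eq_zero_iff {k : ℕ} (Q : Fin k → ℤ) : intVec Q = 0 ↔ Q = 0 := by
  constructor
  · intro h
    funext i
    have := congrArg (fun v => v i) h
    simpa [intVec] using this
  · rintro rfl
    ext i
    simp [intVec]

lemma one_le_norm_intVec {k : ℕ} {U : Fin k → ℤ} (hU : U ≠ 0) : 1 ≤ ‖intVec U‖ := by
  obtain ⟨i, hi⟩ : ∃ i, U i ≠ 0 := by
    by_contra h
    push_neg at h
    exact hU (funext h)
  have h1 : (1 : ℝ) ≤ |(U i : ℝ)| := by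
    have : (1 : ℤ) ≤ |U i| := Int.one_le_abs hi
    exact_mod_cast this
  calc (1 : ℝ) ≤ |(U i : ℝ)| := h1
    _ = ‖intVec U i‖ := by simp [intVec]
    _ ≤ ‖intVec U‖ := by
        rw [EuclideanSpace.norm_eq (intVec U)]
        have h2 : ‖intVec U i‖ ^ 2 ≤ ∑ j, ‖intVec U j‖ ^ 2 :=
          Finset.single_le_sum (f := fun j => ‖intVec U j‖ ^ 2)
            (fun j _ => sq_nonneg _) (Finset.mem_univ i)
        calc ‖intVec U i‖ = Real.sqrt (‖intVec U i‖ ^ 2) := by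
              rw [Real.sqrt_sq (norm_nonneg _)]
          _ ≤ _ := Real.sqrt_le_sqrt h2

lemma distZ_le_norm_sub {k : ℕ} (x : EuclideanSpace ℝ (Fin k)) (P : Fin k → ℤ) :
    distZ x ≤ ‖x - intVec P‖ := by
  have : distZ x ≤ dist x (intVec P) :=
    Metric.infDist_le_dist_of_mem ⟨P, rfl⟩
  rwa [dist_eq_norm] at this

/-- **Best approximation vectors with small error give minimal vectors.**
If `(P,Q)` is a best approximation vector of `θ` (i.e. `Q` is a best approximation denominator
and `‖θQ − P‖ = dist(θQ,ℤ^d)`) with `‖P − θQ‖ < λ₁(ℤ^d) = 1`, then `X = M_θ·(P,Q)` is a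
minimal vector of the lattice `Λ_θ = M_θ·ℤ^{d+c}`. -/
theorem best_approx_is_minimal_vector (d c : ℕ) (hd : 0 < d) (hc : 0 < c)
    (θ : Fin d → Fin c → ℝ) (P : Fin d → ℤ) (Q : Fin c → ℤ)
    (hbest : IsBestDenom θ Q)
    (herr : ‖matVec θ Q - intVec P‖ = distZ (matVec θ Q))
    (hsmall : ‖intVec P - matVec θ Q‖ < 1) :
    IsMinimalIn (LatTheta θ) (Mmap θ (P, Q)) := by
  obtain ⟨hQne, hbest2⟩ := hbest
  refine ⟨⟨(P, Q), rfl⟩, ?_, ?_⟩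
  · intro h
    have h2 : intVec Q = 0 := congrArg Prod.snd h
    exact hQne ((intVec_eq_zero_iff Q).mp h2)
  · rintro Y ⟨⟨P', Q'⟩, rfl⟩ hYne h1 h2
    simp only [Mmap] at h1 h2 ⊢
    have hXnorm : ‖intVec P - matVec θ Q‖ = distZ (matVec θ Q) := by
      rw [norm_sub_rev]; exact herr
    by_cases hQ' : Q' = 0
    · exfalso
      subst hQ'
      have hz : (intVec (0 : Fin c → ℤ)) = 0 := (intVec_eq_zero_iff 0).mpr rfl
      have hm : matVec θ (0 : Fin c → ℤ) = 0 := by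
        ext i; simp [matVec]
      have hP' : P' ≠ 0 := by
        intro h
        apply hYne
        simp [Mmap, h, hz, hm, Prod.ext_iff]
        exact (intVec_eq_zero_iff (0 : Fin d → ℤ)).mpr rfl
      have : (1 : ℝ) ≤ ‖intVec P' - matVec θ (0 : Fin c → ℤ)‖ := by
        rw [hm, sub_zero]; exact one_le_norm_intVec hP'
      linarith [lt_of_le_of_lt h1 hsmall]
    · have key := hbest2 Q' hQ'
      have hd1 : distZ (matVec θ Q) ≤ distZ (matVec θ Q') := key.2 h2
      have hd2 : distZ (matVec θ Q') ≤ ‖intVec P' - matVec θ Q'‖ := by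
        have := distZ_le_norm_sub (matVec θ Q') P'
        rwa [norm_sub_rev] at this
      have heq1 : ‖intVec P' - matVec θ Q'‖ = ‖intVec P - matVec θ Q‖ := by
        rw [hXnorm]
        exact le_antisymm (hXnorm ▸ h1) (le_trans hd1 hd2)
      refine ⟨heq1, ?_⟩
      by_contra hne
      have hlt : ‖intVec Q'‖ < ‖intVec Q‖ := lt_of_le_of_ne h2 hne
      have := key.1 hlt
      have : distZ (matVec θ Q) < ‖intVec P' - matVec θ Q'‖ := lt_of_lt_of_le this hd2
      rw [heq1, hXnorm] at this
      exact lt_irrefl _ this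
end
end

section
/- Suppose ℝ^n is equipped with an arbitrary norm ‖·‖. Let Λ be a full-rank lattice in ℝ^n and let v₁, v₂ ∈ Λ be linearly independent vectors with ‖v₁‖ = λ₁(Λ) and ‖v₂‖ = λ₂(Λ), where λ_i(Λ) denotes the i-th successive minimum of Λ for ‖·‖. Then ℤv₁ + ℤv₂ is a primitive sublattice of Λ (i.e. Λ ∩ (ℝv₁ + ℝv₂) = ℤv₁ + ℤv₂), unless (1/2)(v₁ + v₂) ∈ Λ and ‖v₁‖ = ‖v₂‖ = ‖(1/2)(v₁ + v₂)‖. -/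
noncomputable section

/-- The `i`-th successive minimum of a lattice `Λ` in a normed real vector space: the least
`λ > 0` such that the closed ball `B(0,λ)` contains at least `i` linearly independent
vectors of `Λ`. -/
def succMin {E : Type*} [NormedAddCommGroup E] [NormedSpace ℝ E]
    (Λ : Submodule ℤ E) (i : ℕ) : ℝ :=
  sInf {r : ℝ | 0 < r ∧ ∃ v : Fin i → E, (∀ k, v k ∈ Λ) ∧ LinearIndependent ℝ v ∧
    ∀ k, ‖v k‖ ≤ r}

lemma succMin_one_le {E : Type*} [NormedAddCommGroup E] [NormedSpace ℝ E]
    (Λ : Submodule ℤ E) {w : E} (hw : w ∈ Λ) (hw0 : w ≠ 0) :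
    succMin Λ 1 ≤ ‖w‖ := by
  apply csInf_le ⟨0, fun r hr => hr.1.le⟩
  refine ⟨norm_pos_iff.mpr hw0, ![w], ?_, ?_, ?_⟩
  · intro k; fin_cases k <;> simpa
  · exact linearIndependent_unique_iff.mpr (by simpa)
  · intro k; fin_cases k <;> simp

lemma succMin_two_le {E : Type*} [NormedAddCommGroup E] [NormedSpace ℝ E]
    (Λ : Submodule ℤ E) {w₁ w₂ : E} (hw1 : w₁ ∈ Λ) (hw2 : w₂ ∈ Λ)
    (h : LinearIndependent ℝ ![w₁, w₂]) :
    succMin Λ 2 ≤ max ‖w₁‖ ‖w₂‖ := by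
  have hne : w₁ ≠ 0 := by simpa using h.ne_zero 0
  apply csInf_le ⟨0, fun r hr => hr.1.le⟩
  refine ⟨lt_max_of_lt_left (norm_pos_iff.mpr hne), ![w₁, w₂], ?_, h, ?_⟩
  · intro k; fin_cases k <;> simpa
  · intro k; fin_cases k
    · exact le_max_left _ _
    · exact le_max_right _ _

/-- **Primitivity of the sublattice spanned by the first two minima.** If `v₁, v₂` are
linearly independent lattice vectors realizing the first two successive minima of a
full-rank lattice `Λ` in a finite-dimensional normed space, then `ℤv₁ + ℤv₂` is a primitive
sublattice of `Λ` (every lattice point in the real span of `v₁, v₂` is an integral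
combination of them), unless `(1/2)(v₁+v₂) ∈ Λ` and `‖v₁‖ = ‖v₂‖ = ‖(1/2)(v₁+v₂)‖`. -/
theorem primitive_sublattice_of_first_two_minima
    {E : Type*} [NormedAddCommGroup E] [NormedSpace ℝ E] [FiniteDimensional ℝ E]
    (Λ : Submodule ℤ E) [DiscreteTopology Λ] [IsZLattice ℝ Λ]
    (v₁ v₂ : E) (h₁ : v₁ ∈ Λ) (h₂ : v₂ ∈ Λ)
    (hli : LinearIndependent ℝ ![v₁, v₂])
    (hn1 : ‖v₁‖ = succMin Λ 1) (hn2 : ‖v₂‖ = succMin Λ 2) :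
    (∀ x ∈ Λ, x ∈ Submodule.span ℝ ({v₁, v₂} : Set E) →
      x ∈ Submodule.span ℤ ({v₁, v₂} : Set E)) ∨
    ((2⁻¹ : ℝ) • (v₁ + v₂) ∈ Λ ∧ ‖v₁‖ = ‖v₂‖ ∧ ‖v₂‖ = ‖(2⁻¹ : ℝ) • (v₁ + v₂)‖) := by
  have hpair := LinearIndependent.pair_iff.mp hli
  have hv1 : v₁ ≠ 0 := by simpa using hli.ne_zero 0
  have hv2 : v₂ ≠ 0 := by simpa using hli.ne_zero 1
  have hv1pos : (0:ℝ) < ‖v₁‖ := norm_pos_iff.mpr hv1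
  have hsum : v₁ + v₂ ≠ 0 := by
    intro h
    exact one_ne_zero (hpair 1 1 (by simpa using h)).1
  have h12 : ‖v₁‖ ≤ ‖v₂‖ := by
    rw [hn1]; exact succMin_one_le Λ h₂ hv2
  by_cases hexc : ((2⁻¹ : ℝ) • (v₁ + v₂) ∈ Λ ∧ ‖v₁‖ = ‖v₂‖ ∧
      ‖v₂‖ = ‖(2⁻¹ : ℝ) • (v₁ + v₂)‖)
  · exact Or.inr hexc
  left
  intro x hx hspan
  obtain ⟨a, b, hab⟩ := Submodule.mem_span_pair.mp hspan
  set p : ℤ := round a with hp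
  set q : ℤ := round b with hq
  set a' : ℝ := a - p with ha'
  set b' : ℝ := b - q with hb'
  have haa : |a'| ≤ 1/2 := abs_sub_round a
  have hbb : |b'| ≤ 1/2 := abs_sub_round b
  have hwmem : a' • v₁ + b' • v₂ ∈ Λ := by
    have key : a' • v₁ + b' • v₂ = x - (p • v₁ + q • v₂) := by
      rw [← hab, ← Int.cast_smul_eq_zsmul ℝ p v₁, ← Int.cast_smul_eq_zsmul ℝ q v₂,
        ha', hb']
      module
    rw [key]
    exact Submodule.sub_mem _ hx
      (Submodule.add_mem _ (Submodule.smul_mem _ p h₁) (Submodule.smul_mem _ q h₂))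
  by_cases hb0 : b' = 0
  · by_cases ha0 : a' = 0
    · have hap : a = (p : ℝ) := by
        have := sub_eq_zero.mp ha0; linarith
      have hbq : b = (q : ℝ) := by
        have := sub_eq_zero.mp hb0; linarith
      refine Submodule.mem_span_pair.mpr ⟨p, q, ?_⟩
      rw [← hab, hap, hbq, Int.cast_smul_eq_zsmul ℝ p v₁, Int.cast_smul_eq_zsmul ℝ q v₂]
    · exfalso
      have hw0 : a' • v₁ + b' • v₂ ≠ 0 := by
        rw [hb0, zero_smul, add_zero]
        exact smul_ne_zero ha0 hv1
      have h1 := succMin_one_le Λ hwmem hw0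
      rw [← hn1] at h1
      have hnw : ‖a' • v₁ + b' • v₂‖ = |a'| * ‖v₁‖ := by
        rw [hb0, zero_smul, add_zero, norm_smul, Real.norm_eq_abs]
      rw [hnw] at h1
      nlinarith [abs_pos.mpr ha0]
  · have hw0 : a' • v₁ + b' • v₂ ≠ 0 := by
      intro h
      exact hb0 (hpair a' b' h).2
    have hwle : ‖a' • v₁ + b' • v₂‖ ≤ |a'| * ‖v₁‖ + |b'| * ‖v₂‖ := by
      calc ‖a' • v₁ + b' • v₂‖ ≤ ‖a' • v₁‖ + ‖b' • v₂‖ := norm_add_le _ _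
        _ = |a'| * ‖v₁‖ + |b'| * ‖v₂‖ := by rw [norm_smul, norm_smul]; simp
    rcases eq_or_lt_of_le h12 with heq | hlt
    · -- ‖v₁‖ = ‖v₂‖ : exceptional case, contradiction with hexc
      exfalso
      have h1 := succMin_one_le Λ hwmem hw0
      rw [← hn1] at h1
      have h1ab : (1:ℝ) ≤ |a'| + |b'| := by nlinarith
      have ha2 : |a'| = 1/2 := by linarith
      have hb2 : |b'| = 1/2 := by linarith
      have hm : (2⁻¹ : ℝ) • (v₁ + v₂) ∈ Λ := by
        rcases (abs_eq (by norm_num : (0:ℝ) ≤ 1/2)).mp ha2 with hA | hA <;>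
        rcases (abs_eq (by norm_num : (0:ℝ) ≤ 1/2)).mp hb2 with hB | hB
        · have : (2⁻¹ : ℝ) • (v₁ + v₂) = a' • v₁ + b' • v₂ := by
            rw [hA, hB]; module
          rw [this]; exact hwmem
        · have : (2⁻¹ : ℝ) • (v₁ + v₂) = (a' • v₁ + b' • v₂) + v₂ := by
            rw [hA, hB]; module
          rw [this]; exact Submodule.add_mem _ hwmem h₂
        · have : (2⁻¹ : ℝ) • (v₁ + v₂) = (a' • v₁ + b' • v₂) + v₁ := by
            rw [hA, hB]; module
          rw [this]; exact Submodule.add_mem _ hwmem h₁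
        · have : (2⁻¹ : ℝ) • (v₁ + v₂) = -(a' • v₁ + b' • v₂) := by
            rw [hA, hB]; module
          rw [this]; exact Submodule.neg_mem _ hwmem
      have hm0 : (2⁻¹ : ℝ) • (v₁ + v₂) ≠ 0 := smul_ne_zero (by norm_num) hsum
      have hmlo := succMin_one_le Λ hm hm0
      rw [← hn1] at hmlo
      have hmhi : ‖(2⁻¹ : ℝ) • (v₁ + v₂)‖ ≤ 2⁻¹ * (‖v₁‖ + ‖v₂‖) := by
        rw [norm_smul, Real.norm_eq_abs]
        have := norm_add_le v₁ v₂
        rw [abs_of_pos (by norm_num : (0:ℝ) < 2⁻¹)]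
        nlinarith
      exact hexc ⟨hm, heq, by linarith⟩
    · -- ‖v₁‖ < ‖v₂‖ : contradict second minimum
      exfalso
      have hli2 : LinearIndependent ℝ ![v₁, a' • v₁ + b' • v₂] := by
        rw [LinearIndependent.pair_iff]
        intro s t hst
        have h0 : (s + t * a') • v₁ + (t * b') • v₂ = 0 := by
          rw [← hst]; module
        obtain ⟨e1, e2⟩ := hpair _ _ h0
        have ht : t = 0 := by
          rcases mul_eq_zero.mp e2 with h | h
          · exact h
          · exact absurd h hb0
        subst ht
        constructor
        · linarith [e1]
        · rfl
      have h2' := succMin_two_le Λ h₁ hwmem hli2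
      rw [← hn2] at h2'
      have hmax : max ‖v₁‖ ‖a' • v₁ + b' • v₂‖ < ‖v₂‖ := by
        apply max_lt hlt
        nlinarith
      exact absurd h2' (not_le.mpr hmax)
end
end
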